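/- arXiv:2509.23178 — 5 statements merged into one kernel-verified Lean document; each statement's English description precedes it below -/
import Mathlib

section
/- For every reasoning chain a : ℤ → ℤ×ℤ, every permutation σ of ℤ, the associated reasoning sequence x, and the value sets V^l_i of maximal masked information propagation: for every index j ∈ ℤ and every layer l ≥ 1 there exists i ∈ ℤ such that x(j) ∈ V^l_i and the information quantity satisfies C^l_i = |V^l_i| ≥ 2^(l−1) + 1. -/
/-- A (two-sided infinite) reasoning chain: adjacent pairs link up,
entries of a pair differ, and there are no loops. -/
def IsReasoningChain (a : ℤ → ℤ × ℤ) : Prop :=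
  (∀ i, (a i).1 ≠ (a i).2) ∧
  (∀ i, (a i).2 = (a (i + 1)).1) ∧
  (∀ i j, i ≤ j → (a i).1 ≠ (a j).2)

/-- The reasoning sequence associated to a chain `a` and a permutation `σ` of `ℤ`. -/
def IsReasoningSeq (a : ℤ → ℤ × ℤ) (σ : Equiv.Perm ℤ) (x : ℤ → ℤ) : Prop :=
  ∀ m : ℤ, x (2 * m - 1) = (a (σ m)).1 ∧ x (2 * m) = (a (σ m)).2

/-- Value sets of maximal masked information propagation on the two-sided
sequence `x` : layer 0 is the token itself, layer 1 performs adjacent position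
matching into even positions, and higher layers perform same-token matching
from all earlier positions. -/
def valueSet (x : ℤ → ℤ) : ℕ → ℤ → Set ℤ
  | 0, i => {x i}
  | 1, i => if Even i then {x (i - 1), x i} else {x i}
  | l + 2, i =>
      valueSet x (l + 1) i ∪
        ⋃ (j : ℤ) (_ : j < i ∧ (valueSet x (l + 1) j ∩ valueSet x (l + 1) i).Nonempty),
          valueSet x (l + 1) j

lemma valueSet_succ_succ (x : ℤ → ℤ) (l : ℕ) (i : ℤ) :
    valueSet x (l + 2) i =
      valueSet x (l + 1) i ∪
        ⋃ (j : ℤ) (_ : j < i ∧ (valueSet x (l + 1) j ∩ valueSet x (l + 1) i).Nonempty),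
          valueSet x (l + 1) j := rfl

section main

variable {a : ℤ → ℤ × ℤ} {σ : Equiv.Perm ℤ} {x : ℤ → ℤ}
variable (ha : IsReasoningChain a) (hx : IsReasoningSeq a σ x)

include ha in
lemma c_inj : Function.Injective (fun k : ℤ => (a k).1) := by
  intro i j h
  simp only at h
  by_contra hne
  rcases lt_or_gt_of_ne hne with hlt | hlt
  · have h2 : (a (j - 1)).2 = (a j).1 := by
      have := ha.2.1 (j - 1); rwa [sub_add_cancel] at this
    exact ha.2.2 i (j - 1) (by omega) (by rw [h2, h])
  · have h2 : (a (i - 1)).2 = (a i).1 := by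
      have := ha.2.1 (i - 1); rwa [sub_add_cancel] at this
    exact ha.2.2 j (i - 1) (by omega) (by rw [h2, ← h])

include ha hx in
lemma x_odd (m : ℤ) : x (2 * m - 1) = (a (σ m)).1 := (hx m).1

include ha hx in
lemma x_even (m : ℤ) : x (2 * m) = (a (σ m + 1)).1 := by
  rw [(hx m).2]; exact ha.2.1 (σ m)

include ha hx in
lemma x_is_c (j : ℤ) : ∃ k, x j = (a k).1 := by
  obtain ⟨m, hm⟩ : ∃ m, j = 2 * m ∨ j = 2 * m - 1 := ⟨(j + 1) / 2, by omega⟩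
  rcases hm with rfl | rfl
  · exact ⟨σ m + 1, x_even ha hx m⟩
  · exact ⟨σ m, x_odd ha hx m⟩

include ha hx in
lemma preimage_finite (v : ℤ) : {i : ℤ | x i = v}.Finite := by
  by_cases hv : ∃ k, v = (a k).1
  · obtain ⟨k, rfl⟩ := hv
    apply Set.Finite.subset (Set.Finite.insert (2 * (σ.symm (k - 1)) : ℤ)
      (Set.finite_singleton (2 * σ.symm k - 1)))
    intro i hi
    simp only [Set.mem_setOf_eq] at hi
    obtain ⟨m, hm⟩ : ∃ m, i = 2 * m ∨ i = 2 * m - 1 := ⟨(i + 1) / 2, by omega⟩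
    rcases hm with rfl | rfl
    · rw [x_even ha hx m] at hi
      have : σ m + 1 = k := c_inj ha hi
      have hm' : m = σ.symm (k - 1) := by
        apply σ.injective
        rw [Equiv.apply_symm_apply]; omega
      simp [hm']
    · rw [x_odd ha hx m] at hi
      have : σ m = k := c_inj ha hi
      have hm' : m = σ.symm k := by
        apply σ.injective
        rw [Equiv.apply_symm_apply, this]
      simp [hm']
  · convert Set.finite_empty
    ext i
    simp only [Set.mem_setOf_eq, Set.mem_empty_iff_false, iff_false]
    intro h
    obtain ⟨k, hk⟩ := x_is_c ha hx i
    exact hv ⟨k, by rw [← h, hk]⟩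

include ha hx in
lemma fin_both (l : ℕ) :
    (∀ i, (valueSet x l i).Finite) ∧ (∀ v, {i : ℤ | v ∈ valueSet x l i}.Finite) := by
  induction l using Nat.strong_induction_on with
  | _ l ih =>
    match l with
    | 0 =>
      constructor
      · intro i; simp [valueSet]
      · intro v
        have : {i : ℤ | v ∈ valueSet x 0 i} = {i : ℤ | x i = v} := by
          ext i; simp [valueSet, eq_comm]
        rw [this]; exact preimage_finite ha hx v
    | 1 =>
      constructor
      · intro i
        by_cases h : Even i <;> simp [valueSet, h]
      · intro v
        have hsub : {i : ℤ | v ∈ valueSet x 1 i} ⊆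
            {i : ℤ | x i = v} ∪ (fun i => i + 1) '' {i : ℤ | x i = v} := by
          intro i hi
          simp only [Set.mem_setOf_eq, valueSet] at hi
          by_cases h : Even i
          · rw [if_pos h] at hi
            rcases hi with hi | hi
            · right; exact ⟨i - 1, by simpa [eq_comm] using hi, by ring⟩
            · left; simpa [eq_comm] using hi
          · rw [if_neg h] at hi
            left; simpa [eq_comm] using hi
        exact Set.Finite.subset ((preimage_finite ha hx v).union
          ((preimage_finite ha hx v).image _)) hsub
    | (m + 2) =>
      have IH := ih (m + 1) (by omega)
      have hA := IH.1
      have hB := IH.2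
      constructor
      · intro i
        rw [valueSet_succ_succ]
        apply (hA i).union
        have hS : {j : ℤ | j < i ∧
            (valueSet x (m + 1) j ∩ valueSet x (m + 1) i).Nonempty}.Finite := by
          apply Set.Finite.subset
            (Set.Finite.biUnion (hA i) (fun v _ => hB v))
          rintro j ⟨-, v, hvj, hvi⟩
          exact Set.mem_biUnion hvi hvj
        exact Set.Finite.biUnion hS (fun j _ => hA j)
      · intro v
        have hsub : {i : ℤ | v ∈ valueSet x (m + 2) i} ⊆
            {i : ℤ | v ∈ valueSet x (m + 1) i} ∪
              ⋃ j ∈ {j : ℤ | v ∈ valueSet x (m + 1) j},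
                ⋃ w ∈ valueSet x (m + 1) j, {i : ℤ | w ∈ valueSet x (m + 1) i} := by
          intro i hi
          rw [Set.mem_setOf_eq, valueSet_succ_succ] at hi
          rcases hi with hi | hi
          · left; exact hi
          · right
            simp only [Set.mem_iUnion] at hi
            obtain ⟨j, ⟨hji, w, hwj, hwi⟩, hvj⟩ := hi
            refine Set.mem_biUnion hvj (Set.mem_biUnion hwj hwi)
        exact Set.Finite.subset ((hB v).union
          (Set.Finite.biUnion (hB v) (fun j _ =>
            Set.Finite.biUnion (hA j) (fun w _ => hB w)))) hsub

lemma valueSet_mono (l : ℕ) (i : ℤ) :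
    valueSet x (l + 1) i ⊆ valueSet x (l + 2) i := by
  rw [valueSet_succ_succ]; exact Set.subset_union_left

include ha hx in
lemma cover (n : ℕ) : ∀ s : ℤ, ∃ i : ℤ, ∀ k : ℤ, s ≤ k → k ≤ s + 2 ^ n →
    (a k).1 ∈ valueSet x (n + 1) i := by
  induction n with
  | zero =>
    intro s
    refine ⟨2 * σ.symm s, ?_⟩
    intro k h1 h2
    have heven : Even (2 * (σ.symm s : ℤ)) := ⟨σ.symm s, two_mul _⟩
    have hset : valueSet x 1 (2 * σ.symm s) =
        {x (2 * (σ.symm s : ℤ) - 1), x (2 * σ.symm s)} := by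
      simp [valueSet, heven]
    rw [hset, x_odd ha hx, x_even ha hx, Equiv.apply_symm_apply]
    simp only [pow_zero] at h2
    have hks : k = s ∨ k = s + 1 := by omega
    rcases hks with rfl | rfl
    · left; rfl
    · right; rfl
  | succ n ihn =>
    intro s
    obtain ⟨i1, h1⟩ := ihn s
    obtain ⟨i2, h2⟩ := ihn (s + 2 ^ n)
    have hPpos : (0 : ℤ) < 2 ^ n := by positivity
    have h2p : (2 : ℤ) ^ (n + 1) = 2 ^ n + 2 ^ n := by rw [pow_succ]; ring
    rw [h2p]
    set P : ℤ := 2 ^ n with hP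
    clear_value P
    clear hP h2p ihn
    have hmid1 : (a (s + P)).1 ∈ valueSet x (n + 1) i1 :=
      h1 _ (by omega) le_rfl
    have hmid2 : (a (s + P)).1 ∈ valueSet x (n + 1) i2 :=
      h2 _ le_rfl (by omega)
    rcases lt_trichotomy i1 i2 with h | rfl | h
    · refine ⟨i2, ?_⟩
      intro k hk1 hk2
      rw [valueSet_succ_succ]
      by_cases hk : k ≤ s + P
      · right
        simp only [Set.mem_iUnion]
        exact ⟨i1, ⟨h, ⟨_, hmid1, hmid2⟩⟩, h1 k hk1 hk⟩
      · left
        exact h2 k (by omega) (by omega)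
    · refine ⟨i1, ?_⟩
      intro k hk1 hk2
      apply valueSet_mono
      by_cases hk : k ≤ s + P
      · exact h1 k hk1 hk
      · exact h2 k (by omega) (by omega)
    · refine ⟨i1, ?_⟩
      intro k hk1 hk2
      rw [valueSet_succ_succ]
      by_cases hk : k ≤ s + P
      · left
        exact h1 k hk1 hk
      · right
        simp only [Set.mem_iUnion]
        exact ⟨i2, ⟨h, ⟨_, hmid2, hmid1⟩⟩, h2 k (by omega) (by omega)⟩

end main

/-- for every token value `x j` and every layer `l ≥ 1`, some layer-`l`
node contains `x j` and has information quantity at least `2 ^ (l - 1) + 1`. -/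
theorem lower_bound_information_quantity
    (a : ℤ → ℤ × ℤ) (σ : Equiv.Perm ℤ) (x : ℤ → ℤ)
    (ha : IsReasoningChain a) (hx : IsReasoningSeq a σ x) :
    ∀ (j : ℤ) (l : ℕ), 1 ≤ l →
      ∃ i : ℤ, x j ∈ valueSet x l i ∧ 2 ^ (l - 1) + 1 ≤ (valueSet x l i).ncard := by
  intro j l hl
  obtain ⟨n, rfl⟩ : ∃ n, l = n + 1 := ⟨l - 1, by omega⟩
  obtain ⟨k, hk⟩ := x_is_c ha hx j
  obtain ⟨i, hi⟩ := cover ha hx n k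
  refine ⟨i, ?_, ?_⟩
  · rw [hk]; exact hi k le_rfl (le_add_of_nonneg_right (by positivity))
  · have hsub : (fun t : ℤ => (a t).1) '' Set.Icc k (k + 2 ^ n) ⊆
        valueSet x (n + 1) i := by
      rintro _ ⟨t, ht, rfl⟩
      exact hi t ht.1 ht.2
    have hfin := (fin_both ha hx (n + 1)).1 i
    have hcard : ((fun t : ℤ => (a t).1) '' Set.Icc k (k + 2 ^ n)).ncard = 2 ^ n + 1 := by
      rw [Set.ncard_image_of_injective _ (c_inj ha), ← Finset.coe_Icc,
        Set.ncard_coe_finset, Int.card_Icc]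
      have : (k + 2 ^ n + 1 - k : ℤ) = ((2 ^ n + 1 : ℕ) : ℤ) := by push_cast; ring
      rw [this, Int.toNat_natCast]
    calc 2 ^ (n + 1 - 1) + 1 = 2 ^ n + 1 := by simp
      _ = ((fun t : ℤ => (a t).1) '' Set.Icc k (k + 2 ^ n)).ncard := hcard.symm
      _ ≤ (valueSet x (n + 1) i).ncard := Set.ncard_le_ncard hsub hfin
end

section
/- For every reasoning chain a : ℤ → ℤ×ℤ, every permutation σ of ℤ, the associated reasoning sequence x, and the value sets V^l_i of maximal masked information propagation: for every layer l ≥ 1 and every position i ∈ ℤ, the information quantity satisfies C^l_i = |V^l_i| ≤ 3^(l−1) + 1. -/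
lemma chain_first_injective (a : ℤ → ℤ × ℤ) (ha : IsReasoningChain a) :
    Function.Injective (fun k => (a k).1) := by
  obtain ⟨hne, hlink, hloop⟩ := ha
  intro i j hij
  simp only at hij
  by_contra hne'
  rcases lt_or_gt_of_ne hne' with h | h
  · have : (a i).1 ≠ (a (j - 1)).2 := hloop i (j - 1) (by omega)
    have h2 : (a (j - 1)).2 = (a j).1 := by
      have := hlink (j - 1); rwa [sub_add_cancel] at this
    exact this (by rw [hij, ← h2])
  · have : (a j).1 ≠ (a (i - 1)).2 := hloop j (i - 1) (by omega)
    have h2 : (a (i - 1)).2 = (a i).1 := by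
      have := hlink (i - 1); rwa [sub_add_cancel] at this
    exact this (by rw [← hij, ← h2])

lemma key_interval (a : ℤ → ℤ × ℤ) (σ : Equiv.Perm ℤ) (x : ℤ → ℤ)
    (ha : IsReasoningChain a) (hx : IsReasoningSeq a σ x) :
    ∀ l : ℕ, ∀ i : ℤ, ∃ s : ℤ,
      valueSet x (l + 1) i ⊆ (fun k => (a k).1) '' Set.Icc s (s + 3 ^ l) := by
  obtain ⟨hne, hlink, hloop⟩ := ha
  intro l
  induction l with
  | zero =>
    intro i
    by_cases hi : Even i
    · obtain ⟨m, hm⟩ := hi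
      have h1 : x (i - 1) = (a (σ m)).1 := by
        have := (hx m).1; rwa [show 2 * m - 1 = i - 1 by omega] at this
      have h2 : x i = (a (σ m + 1)).1 := by
        have := (hx m).2; rw [show 2 * m = i by omega] at this
        rw [this, hlink (σ m)]
      refine ⟨σ m, ?_⟩
      rw [valueSet, if_pos ⟨m, hm⟩]
      intro y hy
      rcases hy with hy | hy
      · exact ⟨σ m, Set.mem_Icc.mpr ⟨le_refl _, by omega⟩,
          show (a (σ m)).1 = y by rw [hy, h1]⟩
      · exact ⟨σ m + 1, Set.mem_Icc.mpr ⟨by omega, by omega⟩,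
          show (a (σ m + 1)).1 = y by rw [Set.mem_singleton_iff] at hy; rw [hy, h2]⟩
    · rw [Int.not_even_iff_odd] at hi
      obtain ⟨m, hm⟩ := hi
      have h1 : x i = (a (σ (m + 1))).1 := by
        have := (hx (m + 1)).1; rwa [show 2 * (m + 1) - 1 = i by omega] at this
      refine ⟨σ (m + 1), ?_⟩
      rw [valueSet, if_neg (by rw [Int.not_even_iff_odd]; exact ⟨m, hm⟩)]
      intro y hy
      exact ⟨σ (m + 1), Set.mem_Icc.mpr ⟨le_refl _, by omega⟩,
        show (a (σ (m + 1))).1 = y by rw [Set.mem_singleton_iff] at hy; rw [hy, h1]⟩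
  | succ l IH =>
    intro i
    obtain ⟨s, hs⟩ := IH i
    refine ⟨s - 3 ^ l, ?_⟩
    have hcinj : Function.Injective (fun k : ℤ => (a k).1) :=
      chain_first_injective a ⟨hne, hlink, hloop⟩
    have hpow : (3 : ℤ) ^ (l + 1) = 3 * 3 ^ l := by ring
    intro y hy
    rcases hy with hy | hy
    · obtain ⟨k, hk, hky⟩ := hs hy
      simp only [Set.mem_Icc] at hk
      refine ⟨k, Set.mem_Icc.mpr ⟨by omega, ?_⟩, hky⟩
      rw [hpow]; omega
    · simp only [Set.mem_iUnion] at hy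
      obtain ⟨j, ⟨hji, z, hz1, hz2⟩, hyj⟩ := hy
      obtain ⟨t, ht⟩ := IH j
      obtain ⟨k1, hk1, hk1z⟩ := ht hz1
      obtain ⟨k2, hk2, hk2z⟩ := hs hz2
      have hk12 : k1 = k2 := hcinj (by rw [hk1z, hk2z])
      obtain ⟨k, hk, hky⟩ := ht hyj
      simp only [Set.mem_Icc] at hk hk1 hk2 ⊢
      refine ⟨k, ⟨by omega, ?_⟩, hky⟩
      rw [hpow]; omega

/-- for every layer `l ≥ 1` and every position `i`, the information
quantity satisfies `C^l_i = |V^l_i| ≤ 3 ^ (l - 1) + 1`. -/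
theorem upper_bound_information_quantity
    (a : ℤ → ℤ × ℤ) (σ : Equiv.Perm ℤ) (x : ℤ → ℤ)
    (ha : IsReasoningChain a) (hx : IsReasoningSeq a σ x) :
    ∀ (l : ℕ), 1 ≤ l → ∀ i : ℤ,
      (valueSet x l i).Finite ∧ (valueSet x l i).ncard ≤ 3 ^ (l - 1) + 1 := by
  intro l hl i
  obtain ⟨l', rfl⟩ : ∃ l', l = l' + 1 := ⟨l - 1, by omega⟩
  obtain ⟨s, hs⟩ := key_interval a σ x ha hx l' i
  have hIccfin : (Set.Icc s (s + 3 ^ l')).Finite := Set.finite_Icc _ _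
  have hfin : ((fun k : ℤ => (a k).1) '' Set.Icc s (s + 3 ^ l')).Finite :=
    hIccfin.image _
  have hcinj := chain_first_injective a ha
  constructor
  · exact hfin.subset hs
  · calc (valueSet x (l' + 1) i).ncard
        ≤ ((fun k : ℤ => (a k).1) '' Set.Icc s (s + 3 ^ l')).ncard :=
          Set.ncard_le_ncard hs hfin
      _ = (Set.Icc s (s + 3 ^ l')).ncard := Set.ncard_image_of_injective _ hcinj
      _ ≤ 3 ^ (l' + 1 - 1) + 1 := by
          rw [← Finset.coe_Icc, Set.ncard_coe_finset, Int.card_Icc]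
          have h3 : s + 3 ^ l' + 1 - s = ((3 ^ l' + 1 : ℕ) : ℤ) := by push_cast; ring
          rw [h3, Int.toNat_natCast]
          simp
end

section
/- Let n ≥ 1, α ≠ 0, β ∈ ℝ, ε > 0, and let L_N : ℝ^n → ℝ^n be the LayerNorm map L_N(x)_i = α·(x_i − E(x))/√(Var(x)+ε) + β, where E(x) = (1/n)∑_i x_i and Var(x) = (1/n)∑_i x_i² − E(x)². Then L_N is injective on every fiber of the mean: if x ≠ y and E(x) = E(y), then L_N(x) ≠ L_N(y). -/
/-- Coordinate mean `E(x)` of a vector in `ℝ^n`. -/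
noncomputable def lnMean (n : ℕ) (x : Fin n → ℝ) : ℝ := (∑ i, x i) / n

/-- Coordinate variance `Var(x)` of a vector in `ℝ^n`. -/
noncomputable def lnVar (n : ℕ) (x : Fin n → ℝ) : ℝ :=
  (∑ i, (x i) ^ 2) / n - (lnMean n x) ^ 2

/-- LayerNorm with parameters `α`, `β` and stabilizer `ε`. -/
noncomputable def layerNorm (n : ℕ) (α β ε : ℝ) (x : Fin n → ℝ) : Fin n → ℝ :=
  fun i => α * (x i - lnMean n x) / Real.sqrt (lnVar n x + ε) + β

lemma lnVar_eq (n : ℕ) (hn : 1 ≤ n) (x : Fin n → ℝ) :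
    lnVar n x = (∑ i, (x i - lnMean n x) ^ 2) / n := by
  have hn0 : (n : ℝ) ≠ 0 := Nat.cast_ne_zero.mpr (by omega)
  have hsum : ∑ i, x i = n * lnMean n x := by
    rw [lnMean]
    field_simp
  have h : ∑ i, (x i - lnMean n x) ^ 2
      = (∑ i, (x i) ^ 2) - 2 * lnMean n x * (∑ i, x i) + n * (lnMean n x) ^ 2 := by
    simp [sub_sq, Finset.sum_add_distrib, Finset.sum_sub_distrib, Finset.mul_sum,
      Finset.sum_const]
    ring_nf
    exact Finset.sum_congr rfl fun i _ => by ring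
  rw [h, hsum, lnVar]
  field_simp
  ring

lemma lnVar_nonneg (n : ℕ) (hn : 1 ≤ n) (x : Fin n → ℝ) : 0 ≤ lnVar n x := by
  rw [lnVar_eq n hn x]
  have hn0 : (0:ℝ) < n := by exact_mod_cast Nat.pos_of_ne_zero (by omega)
  exact div_nonneg (Finset.sum_nonneg fun i _ => sq_nonneg _) hn0.le

/-- LayerNorm is injective on every fiber of the mean: if `x ≠ y`
and `E(x) = E(y)`, then `L_N(x) ≠ L_N(y)`. -/
theorem layerNorm_injective_on_mean_fibers
    (n : ℕ) (hn : 1 ≤ n) (α β ε : ℝ) (hα : α ≠ 0) (hε : 0 < ε)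
    (x y : Fin n → ℝ) (hxy : x ≠ y) (hmean : lnMean n x = lnMean n y) :
    layerNorm n α β ε x ≠ layerNorm n α β ε y := by
  intro heq
  apply hxy
  have hn0 : (0:ℝ) < n := by exact_mod_cast Nat.pos_of_ne_zero (by omega)
  set m := lnMean n x with hm
  set Vx := lnVar n x with hVx
  set Vy := lnVar n y with hVy
  have hVxpos : 0 < Vx + ε := by linarith [lnVar_nonneg n hn x]
  have hVypos : 0 < Vy + ε := by linarith [lnVar_nonneg n hn y]
  set a := Real.sqrt (Vx + ε) with ha
  set b := Real.sqrt (Vy + ε) with hb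
  have hapos : 0 < a := Real.sqrt_pos.mpr hVxpos
  have hbpos : 0 < b := Real.sqrt_pos.mpr hVypos
  have ha2 : a ^ 2 = Vx + ε := Real.sq_sqrt hVxpos.le
  have hb2 : b ^ 2 = Vy + ε := Real.sq_sqrt hVypos.le
  -- coordinatewise relation
  have hkey : ∀ i, x i - m = (a / b) * (y i - m) := by
    intro i
    have := congrFun heq i
    simp only [layerNorm, ← hm, ← hmean, ← hVx, ← hVy, ← ha, ← hb] at this
    have h2 : α * (x i - m) / a = α * (y i - m) / b := by linarith
    field_simp at h2 ⊢
    have h3 := mul_left_cancel₀ hα (by rw [h2]; ring : α * ((x i - m) * b) = α * ((y i - m) * a))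
    linarith [h3]
  -- sum of squares relation
  have hsumsq : ∑ i, (x i - m) ^ 2 = (a / b) ^ 2 * ∑ i, (y i - m) ^ 2 := by
    rw [Finset.mul_sum]
    exact Finset.sum_congr rfl fun i _ => by rw [hkey i]; ring
  have hvarrel : Vx = (a / b) ^ 2 * Vy := by
    rw [hVx, hVy, lnVar_eq n hn x, lnVar_eq n hn y, ← hm, ← hmean, hsumsq]
    ring
  have hVeq : Vx = Vy := by
    have h : Vx * b ^ 2 = Vy * a ^ 2 := by
      have := hvarrel
      field_simp at this
      linarith [this]
    rw [ha2, hb2] at h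
    nlinarith
  have hab : a = b := by rw [ha, hb, hVeq]
  funext i
  have := hkey i
  rw [hab, div_self hbpos.ne'] at this
  linarith
end

section
/- Softmax perturbation stability: let n ≥ 1, M ≥ 0, 0 ≤ η ≤ 1, and let A, B : {1,…,n} → ℝ satisfy |A_t| ≤ M, |B_t| ≤ M, and |A_t − B_t| ≤ η for all t. Then for every j, |exp(A_j)/∑_{t=1}^n exp(A_t) − exp(B_j)/∑_{t=1}^n exp(B_t)| ≤ 4·n·η·e^(2M). -/
lemma exp_lip_aux {M a b : ℝ} (ha : a ≤ M) (hb : b ≤ M) :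
    |Real.exp a - Real.exp b| ≤ Real.exp M * |a - b| := by
  wlog h : b ≤ a generalizing a b
  · rw [abs_sub_comm, abs_sub_comm a b]; exact this hb ha (le_of_not_ge h)
  rw [abs_of_nonneg (sub_nonneg.2 (Real.exp_le_exp.2 h)),
      abs_of_nonneg (sub_nonneg.2 h)]
  have h1 : b - a + 1 ≤ Real.exp (b - a) := Real.add_one_le_exp _
  have h2 : Real.exp b = Real.exp a * Real.exp (b - a) := by
    rw [← Real.exp_add]; ring_nf
  have h3 : Real.exp a ≤ Real.exp M := Real.exp_le_exp.2 ha
  have h4 : (0:ℝ) < Real.exp a := Real.exp_pos a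
  nlinarith

/-- softmax perturbation stability. If two score vectors `A`, `B` on
`{1,…,n}` are bounded by `M` and differ entrywise by at most `η ≤ 1`, then their
softmax outputs differ entrywise by at most `4·n·η·e^(2M)`. -/
theorem softmax_perturbation_stability
    (n : ℕ) (hn : 1 ≤ n) (M η : ℝ) (hM : 0 ≤ M) (hη0 : 0 ≤ η) (hη1 : η ≤ 1)
    (A B : Fin n → ℝ)
    (hA : ∀ t, |A t| ≤ M) (hB : ∀ t, |B t| ≤ M) (hAB : ∀ t, |A t - B t| ≤ η)
    (j : Fin n) :
    |Real.exp (A j) / (∑ t, Real.exp (A t)) -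
        Real.exp (B j) / (∑ t, Real.exp (B t))|
      ≤ 4 * n * η * Real.exp (2 * M) := by
  set SA := ∑ t, Real.exp (A t) with hSAdef
  set SB := ∑ t, Real.exp (B t) with hSBdef
  -- lower bound for SA
  have hlbA : Real.exp (-M) * n ≤ SA := by
    calc Real.exp (-M) * n = ∑ _t : Fin n, Real.exp (-M) := by
          simp [mul_comm]
      _ ≤ SA := by
          apply Finset.sum_le_sum
          intro t _
          exact Real.exp_le_exp.2 (neg_le_of_abs_le (hA t))
  have hn' : (1:ℝ) ≤ (n:ℝ) := by exact_mod_cast hn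
  have hSApos : 0 < SA := lt_of_lt_of_le (by positivity) hlbA
  have hSBpos : 0 < SB := by
    apply Finset.sum_pos (fun t _ => Real.exp_pos _)
    exact Finset.univ_nonempty_iff.2 ⟨j⟩
  -- entrywise exp bound
  have hpt : ∀ t, |Real.exp (A t) - Real.exp (B t)| ≤ Real.exp M * η := by
    intro t
    calc |Real.exp (A t) - Real.exp (B t)|
        ≤ Real.exp M * |A t - B t| :=
          exp_lip_aux (le_of_abs_le (hA t)) (le_of_abs_le (hB t))
      _ ≤ Real.exp M * η := by
          have := Real.exp_pos M
          nlinarith [hAB t]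
  -- sum difference bound
  have hsum : |SB - SA| ≤ n * (Real.exp M * η) := by
    rw [hSAdef, hSBdef, ← Finset.sum_sub_distrib]
    calc |∑ t, (Real.exp (B t) - Real.exp (A t))|
        ≤ ∑ t, |Real.exp (B t) - Real.exp (A t)| := Finset.abs_sum_le_sum_abs _ _
      _ ≤ ∑ _t : Fin n, Real.exp M * η := by
          apply Finset.sum_le_sum
          intro t _
          rw [abs_sub_comm]; exact hpt t
      _ = n * (Real.exp M * η) := by simp
  have hjB : Real.exp (B j) ≤ SB :=
    Finset.single_le_sum (f := fun t => Real.exp (B t))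
      (fun t _ => (Real.exp_pos _).le) (Finset.mem_univ j)
  -- combine as single fraction
  rw [div_sub_div _ _ (ne_of_gt hSApos) (ne_of_gt hSBpos), abs_div,
      abs_of_pos (mul_pos hSApos hSBpos), div_le_iff₀ (mul_pos hSApos hSBpos)]
  have hnum : |Real.exp (A j) * SB - SA * Real.exp (B j)|
      ≤ 2 * n * (Real.exp M * η) * SB := by
    have : Real.exp (A j) * SB - SA * Real.exp (B j)
        = (Real.exp (A j) - Real.exp (B j)) * SB + Real.exp (B j) * (SB - SA) := by
      ring
    rw [this]
    calc |(Real.exp (A j) - Real.exp (B j)) * SB + Real.exp (B j) * (SB - SA)|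
        ≤ |(Real.exp (A j) - Real.exp (B j)) * SB| + |Real.exp (B j) * (SB - SA)| :=
          abs_add_le _ _
      _ = |Real.exp (A j) - Real.exp (B j)| * SB + Real.exp (B j) * |SB - SA| := by
          rw [abs_mul, abs_mul, abs_of_pos hSBpos,
            abs_of_pos (Real.exp_pos (B j))]
      _ ≤ Real.exp M * η * SB + SB * (n * (Real.exp M * η)) := by
          have h1 := hpt j
          have h2 := (Real.exp_pos (B j)).le
          nlinarith [abs_nonneg (SB - SA), abs_nonneg (Real.exp (A j) - Real.exp (B j))]
      _ ≤ 2 * n * (Real.exp M * η) * SB := by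
          have hM' := Real.exp_pos M
          nlinarith [mul_nonneg (mul_nonneg hM'.le hη0) hSBpos.le, hn']
  refine hnum.trans ?_
  -- 2*n*e^M*η*SB ≤ 4*n*η*e^(2M) * (SA*SB)
  have hkey : Real.exp (2*M) * Real.exp (-M) = Real.exp M := by
    rw [← Real.exp_add]; ring_nf
  have hSAlb : Real.exp (-M) ≤ SA := le_trans (by nlinarith [Real.exp_pos (-M)]) hlbA
  have h2M := Real.exp_pos (2*M)
  have hnM := Real.exp_pos (-M)
  have hM' := Real.exp_pos M
  have h1 : Real.exp M ≤ Real.exp (2*M) * SA := by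
    calc Real.exp M = Real.exp (2*M) * Real.exp (-M) := hkey.symm
      _ ≤ _ := mul_le_mul_of_nonneg_left hSAlb h2M.le
  have hc : 0 ≤ (n:ℝ) * η * SB := by positivity
  nlinarith [mul_le_mul_of_nonneg_left h1 hc, mul_pos h2M hSApos,
    mul_nonneg (mul_nonneg hc (mul_pos h2M hSApos).le) hM'.le]
end

section
/- Buffer attention lemma: let n ≥ 1, L ≥ 1, D ≥ 1. Let R be the cyclic left-shift on ℝ^D (e_c·R = e_(c−1), basis indexed by ℤ/Dℤ). Let T be a set of tokens with a buffer map k : T → ℤ/Dℤ that is well-separated: for all t, t′ ∈ T and all integers δ with |δ| ≤ 2(n+1)·3^L, if k(t) + δ = k(t′) in ℤ/Dℤ then t = t′ and δ = 0. For each 1 ≤ i ≤ n let C_i ≥ 1, b_i : {1,…,C_i} → T, and d_i ∈ ℤ with |u − d_i| ≤ (3^L − 1)/2 for all 1 ≤ u ≤ C_i, and set X_i = ∑_{u=1}^{C_i} e_(k(b_i(u)))·R^(i·3^L + u − d_i) ∈ ℝ^D. Define the attention score A_{i,j} = ⟨X_i·(∑_{m=1}^{(n+1)·3^L} R^(−m)),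 X_j⟩. Then: (1) if the token sets {b_i(u) : 1 ≤ u ≤ C_i} and {b_j(v) : 1 ≤ v ≤ C_j} are disjoint, then A_{i,j} = 0; (2) if 1 ≤ j < i ≤ n and these token sets intersect, then A_{i,j} ≥ 1. -/
/-- Standard basis vector `e_a` of `ℝ^D`, coordinates indexed by `ZMod D`. -/
def eBasis (D : ℕ) (a : ZMod D) : ZMod D → ℝ := fun c => if c = a then 1 else 0

/-- Right multiplication by the `m`-th power (`m : ℤ`) of the cyclic left-shift
matrix `R` of `ℝ^D`: for a row vector `v`, `(v · R^m) c = v (c + m)`.  Indeed `R`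
is determined by `e_c · R = e_{c-1}`, so `e_c · R^m = e_{c-m}` for all `m : ℤ`. -/
def mulRpow (D : ℕ) (m : ℤ) (v : ZMod D → ℝ) : ZMod D → ℝ := fun c => v (c + (m : ZMod D))

/-- Standard inner product on `ℝ^D` with coordinates indexed by `ZMod D`. -/
def dotP (D : ℕ) [NeZero D] (u v : ZMod D → ℝ) : ℝ := ∑ c, u c * v c

lemma mulRpow_eB (D : ℕ) (m : ℤ) (a : ZMod D) :
    mulRpow D m (eBasis D a) = eBasis D (a - (m : ZMod D)) := by
  funext c
  simp only [mulRpow, eBasis, eq_sub_iff_add_eq]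

lemma mulRpow_sum (D : ℕ) (m : ℤ) {ι : Type*} (s : Finset ι) (f : ι → ZMod D → ℝ) :
    mulRpow D m (∑ i ∈ s, f i) = ∑ i ∈ s, mulRpow D m (f i) := by
  funext c; simp [mulRpow, Finset.sum_apply]

lemma dotP_eB (D : ℕ) [NeZero D] (a b : ZMod D) :
    dotP D (eBasis D a) (eBasis D b) = if a = b then 1 else 0 := by
  simp only [dotP, eBasis]
  rw [Finset.sum_eq_single a]
  · simp [eq_comm]
  · intro c _ hc; simp [hc]
  · simp

lemma dotP_sum_left (D : ℕ) [NeZero D] {ι : Type*} (s : Finset ι) (f : ι → ZMod D → ℝ)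
    (v : ZMod D → ℝ) :
    dotP D (∑ i ∈ s, f i) v = ∑ i ∈ s, dotP D (f i) v := by
  simp only [dotP, Finset.sum_apply, Finset.sum_mul]
  exact Finset.sum_comm

lemma dotP_sum_right (D : ℕ) [NeZero D] {ι : Type*} (s : Finset ι) (u : ZMod D → ℝ)
    (f : ι → ZMod D → ℝ) :
    dotP D u (∑ i ∈ s, f i) = ∑ i ∈ s, dotP D u (f i) := by
  simp only [dotP, Finset.sum_apply, Finset.mul_sum]
  exact Finset.sum_comm

lemma one_le_triple_sum (f : ℕ → ℕ → ℕ → ℝ) (s1 s2 s3 : Finset ℕ)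
    (hnn : ∀ m u v, 0 ≤ f m u v) (m₀ u₀ v₀ : ℕ)
    (h1 : m₀ ∈ s1) (h2 : u₀ ∈ s2) (h3 : v₀ ∈ s3)
    (hval : 1 ≤ f m₀ u₀ v₀) : 1 ≤ ∑ m ∈ s1, ∑ u ∈ s2, ∑ v ∈ s3, f m u v := by
  calc (1 : ℝ) ≤ f m₀ u₀ v₀ := hval
    _ ≤ ∑ v ∈ s3, f m₀ u₀ v :=
        Finset.single_le_sum (f := fun v => f m₀ u₀ v) (fun v _ => hnn _ _ _) h3
    _ ≤ ∑ u ∈ s2, ∑ v ∈ s3, f m₀ u v :=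
        Finset.single_le_sum (f := fun u => ∑ v ∈ s3, f m₀ u v)
          (fun u _ => Finset.sum_nonneg fun v _ => hnn _ _ _) h2
    _ ≤ ∑ m ∈ s1, ∑ u ∈ s2, ∑ v ∈ s3, f m u v :=
        Finset.single_le_sum (f := fun m => ∑ u ∈ s2, ∑ v ∈ s3, f m u v)
          (fun m _ => Finset.sum_nonneg fun u _ => Finset.sum_nonneg fun v _ => hnn _ _ _) h1

/-- buffer attention lemma.  With a well-separated buffer map
`k : T → ZMod D` and layer states
`X_i = ∑_{u=1}^{C_i} e_{k(b_i(u))} · R^{i·3^L + u - d_i}`, the attention scores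
`A_{i,j} = ⟨X_i · ∑_{m=1}^{(n+1)·3^L} R^{-m}, X_j⟩` vanish when the token sets of
positions `i` and `j` are disjoint, and are at least `1` when `1 ≤ j < i ≤ n` and
the token sets intersect. -/
theorem buffer_attention_lemma
    (n L D : ℕ) (hn : 1 ≤ n) (hL : 1 ≤ L) [NeZero D]
    (T : Type*) (kmap : T → ZMod D)
    (hsep : ∀ t t' : T, ∀ δ : ℤ, |δ| ≤ 2 * ((n : ℤ) + 1) * 3 ^ L →
      kmap t + (δ : ZMod D) = kmap t' → t = t' ∧ δ = 0)
    (C : ℕ → ℕ) (b : ℕ → ℕ → T) (d : ℕ → ℤ)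
    (hC : ∀ i, 1 ≤ i → i ≤ n → 1 ≤ C i)
    (hd : ∀ i, 1 ≤ i → i ≤ n → ∀ u : ℕ, 1 ≤ u → u ≤ C i →
      |(u : ℤ) - d i| ≤ ((3 : ℤ) ^ L - 1) / 2)
    (X : ℕ → ZMod D → ℝ)
    (hX : ∀ i, X i = ∑ u ∈ Finset.Icc 1 (C i),
      mulRpow D ((i : ℤ) * 3 ^ L + (u : ℤ) - d i) (eBasis D (kmap (b i u))))
    (A : ℕ → ℕ → ℝ)
    (hA : ∀ i j, A i j =
      dotP D (∑ m ∈ Finset.Icc 1 ((n + 1) * 3 ^ L), mulRpow D (-(m : ℤ)) (X i)) (X j)) :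
    (∀ i j, 1 ≤ i → i ≤ n → 1 ≤ j → j ≤ n →
      (∀ u v, 1 ≤ u → u ≤ C i → 1 ≤ v → v ≤ C j → b i u ≠ b j v) →
      A i j = 0) ∧
    (∀ i j, 1 ≤ j → j < i → i ≤ n →
      (∃ u v, 1 ≤ u ∧ u ≤ C i ∧ 1 ≤ v ∧ v ≤ C j ∧ b i u = b j v) →
      1 ≤ A i j) := by
  have hp0 : (0 : ℤ) < 3 ^ L := by positivity
  obtain ⟨kk, hkk⟩ : Odd ((3 : ℤ) ^ L) := Odd.pow ⟨1, by norm_num⟩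
  have h2 : 2 * (((3 : ℤ) ^ L - 1) / 2) = (3 : ℤ) ^ L - 1 := by omega
  -- expansion of the attention score as a triple sum of indicators
  have hAexp : ∀ i j, A i j =
      ∑ m ∈ Finset.Icc 1 ((n + 1) * 3 ^ L), ∑ u ∈ Finset.Icc 1 (C i),
        ∑ v ∈ Finset.Icc 1 (C j),
          (if kmap (b i u) +
              ((((m : ℤ) - ((i : ℤ) * 3 ^ L + (u : ℤ) - d i)
                + ((j : ℤ) * 3 ^ L + (v : ℤ) - d j)) : ℤ) : ZMod D) = kmap (b j v)
            then (1 : ℝ) else 0) := by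
    intro i j
    rw [hA, hX i, hX j]
    simp only [mulRpow_sum]
    rw [dotP_sum_left]
    refine Finset.sum_congr rfl fun m _ => ?_
    rw [dotP_sum_left]
    refine Finset.sum_congr rfl fun u _ => ?_
    rw [dotP_sum_right]
    refine Finset.sum_congr rfl fun v _ => ?_
    simp only [mulRpow_eB, dotP_eB]
    congr 1
    rw [eq_iff_iff]
    push_cast
    constructor <;> intro h <;> linear_combination h
  constructor
  · -- disjoint token sets: score is 0
    intro i j hi1 hi2 hj1 hj2 hdisj
    rw [hAexp]
    refine Finset.sum_eq_zero fun m hm => Finset.sum_eq_zero fun u hu =>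
      Finset.sum_eq_zero fun v hv => ?_
    rw [Finset.mem_Icc] at hm hu hv
    rw [if_neg]
    intro heq
    have hu' := hd i hi1 hi2 u hu.1 hu.2
    have hv' := hd j hj1 hj2 v hv.1 hv.2
    have hbound : |(m : ℤ) - ((i : ℤ) * 3 ^ L + (u : ℤ) - d i)
        + ((j : ℤ) * 3 ^ L + (v : ℤ) - d j)| ≤ 2 * ((n : ℤ) + 1) * 3 ^ L := by
      have hm1 : (1 : ℤ) ≤ (m : ℤ) := by exact_mod_cast hm.1
      have hm2 : (m : ℤ) ≤ ((n : ℤ) + 1) * 3 ^ L := by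
        have h := hm.2
        have h' : ((m : ℕ) : ℤ) ≤ (((n + 1) * 3 ^ L : ℕ) : ℤ) := by exact_mod_cast h
        push_cast at h'
        linarith
      have hiZ : (1 : ℤ) ≤ (i : ℤ) ∧ (i : ℤ) ≤ n :=
        ⟨by exact_mod_cast hi1, by exact_mod_cast hi2⟩
      have hjZ : (1 : ℤ) ≤ (j : ℤ) ∧ (j : ℤ) ≤ n :=
        ⟨by exact_mod_cast hj1, by exact_mod_cast hj2⟩
      have hjp1 : ((j : ℤ) - i) * 3 ^ L ≤ ((n : ℤ) - 1) * 3 ^ L :=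
        mul_le_mul_of_nonneg_right (by linarith [hiZ.1, hjZ.2]) hp0.le
      have hjp2 : (-((n : ℤ) - 1)) * 3 ^ L ≤ ((j : ℤ) - i) * 3 ^ L :=
        mul_le_mul_of_nonneg_right (by linarith [hiZ.2, hjZ.1]) hp0.le
      rw [abs_le] at hu' hv' ⊢
      constructor <;> linarith [h2, hjp1, hjp2, hu'.1, hu'.2, hv'.1, hv'.2, hp0, hm1, hm2]
    obtain ⟨hbt, -⟩ := hsep _ _ _ hbound heq
    exact hdisj u v hu.1 hu.2 hv.1 hv.2 hbt
  · -- intersecting token sets with j < i: score is at least 1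
    intro i j hj1 hji hin hex
    obtain ⟨u, v, hu1, hu2, hv1, hv2, hbv⟩ := hex
    have hi1 : 1 ≤ i := le_trans hj1 hji.le
    have hjn : j ≤ n := le_trans hji.le hin
    have hu' := hd i hi1 hin u hu1 hu2
    have hv' := hd j hj1 hjn v hv1 hv2
    rw [abs_le] at hu' hv'
    have hiZ : (1 : ℤ) ≤ (i : ℤ) ∧ (i : ℤ) ≤ n :=
      ⟨by exact_mod_cast hi1, by exact_mod_cast hin⟩
    have hjZ : (1 : ℤ) ≤ (j : ℤ) ∧ (j : ℤ) ≤ n :=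
      ⟨by exact_mod_cast hj1, by exact_mod_cast hjn⟩
    have hjiZ : (j : ℤ) + 1 ≤ (i : ℤ) := by exact_mod_cast hji
    obtain ⟨m₀Z, hm₀Z⟩ : ∃ z : ℤ,
        z = ((i : ℤ) - j) * 3 ^ L + ((u : ℤ) - d i) - ((v : ℤ) - d j) := ⟨_, rfl⟩
    have hip1 : 1 * (3 : ℤ) ^ L ≤ ((i : ℤ) - j) * 3 ^ L :=
      mul_le_mul_of_nonneg_right (by linarith) hp0.le
    have hip2 : ((i : ℤ) - j) * 3 ^ L ≤ ((n : ℤ) - 1) * 3 ^ L :=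
      mul_le_mul_of_nonneg_right (by linarith [hiZ.2, hjZ.1]) hp0.le
    have hm₀low : (1 : ℤ) ≤ m₀Z := by
      rw [hm₀Z]; linarith [h2, hip1, hu'.1, hv'.2]
    have hm₀hi : m₀Z ≤ ((n : ℤ) + 1) * 3 ^ L := by
      rw [hm₀Z]; linarith [h2, hip2, hu'.2, hv'.1, hp0]
    obtain ⟨m₀, hm₀⟩ : ∃ m : ℕ, m = m₀Z.toNat := ⟨_, rfl⟩
    have hm₀cast : (m₀ : ℤ) = m₀Z := by
      rw [hm₀]; exact Int.toNat_of_nonneg (by linarith)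
    have hm₀mem : m₀ ∈ Finset.Icc 1 ((n + 1) * 3 ^ L) := by
      rw [Finset.mem_Icc]
      constructor
      · exact_mod_cast hm₀cast ▸ hm₀low
      · have h1 : (m₀ : ℤ) ≤ (((n + 1) * 3 ^ L : ℕ) : ℤ) := by
          push_cast
          rw [hm₀cast]
          linarith
        exact_mod_cast h1
    have hδ : (m₀ : ℤ) - ((i : ℤ) * 3 ^ L + (u : ℤ) - d i)
        + ((j : ℤ) * 3 ^ L + (v : ℤ) - d j) = 0 := by
      rw [hm₀cast, hm₀Z]; ring
    rw [hAexp]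
    refine one_le_triple_sum
      (fun m u' v' => if kmap (b i u') +
          ((((m : ℤ) - ((i : ℤ) * 3 ^ L + (u' : ℤ) - d i)
            + ((j : ℤ) * 3 ^ L + (v' : ℤ) - d j)) : ℤ) : ZMod D) = kmap (b j v')
        then (1 : ℝ) else 0)
      _ _ _ (fun m u' v' => by split <;> norm_num) m₀ u v hm₀mem
      (Finset.mem_Icc.mpr ⟨hu1, hu2⟩) (Finset.mem_Icc.mpr ⟨hv1, hv2⟩) ?_
    rw [hδ, if_pos (by rw [hbv]; push_cast; ring)]
end
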